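/- Let F ⊂ B(0,1) ⊂ ℝ^d be compact, and for each n let F be covered by N_1·N_2⋯N_n balls of radius r_1·r_2⋯r_n, where N_i ≥ 1 are integers and r_i ∈ [r_min, r_max] ⊂ (0,1). Then for ε with r_1⋯r_n < ε ≤ r_1⋯r_{n−1}, L^d(⟨F⟩_ε) ≤ (1 + 1/r_min)^d · V_d · Π_{i=1}^n (r_i^d N_i). -/

import Mathlib

open MeasureTheory Metric Set Finset

/-!
Every point of `⟨F⟩_ε` lies within `ε` of a point of `closure F`, hence within
`ε + r_1⋯r_n` of one of the `N_1⋯N_n` centres, so `⟨F⟩_ε` is covered by the concentric balls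
of radius `ε + r_1⋯r_n`. Since `ε ≤ r_1⋯r_{n−1} ≤ r_1⋯r_n / r_min`, that radius is at most
`(1 + 1/r_min) r_1⋯r_n`, and summing the volumes of these balls gives the bound.
-/

theorem Metric.cthickening_subset_iUnion_closedBall_add {α ι : Type*} [PseudoMetricSpace α]
    [ProperSpace α] [Finite ι] {E : Set α} {c : ι → α} {δ R : ℝ} (hδ : 0 ≤ δ)
    (hE : E ⊆ ⋃ i, closedBall (c i) R) :
    cthickening δ E ⊆ ⋃ i, closedBall (c i) (δ + R) := by
  have hclosure : closure E ⊆ ⋃ i, closedBall (c i) R :=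
    closure_minimal hE (isClosed_iUnion_of_finite fun _ => isClosed_closedBall)
  rw [cthickening_eq_biUnion_closedBall E hδ]
  refine iUnion₂_subset fun y hy => ?_
  obtain ⟨i, hi⟩ := mem_iUnion.1 (hclosure hy)
  have hball : closedBall y δ ⊆ closedBall (c i) (δ + R) :=
    closedBall_subset_closedBall' (by rw [mem_closedBall] at hi; linarith)
  exact hball.trans (subset_iUnion_of_subset i Subset.rfl)

theorem MeasureTheory.Measure.addHaar_iUnion_closedBall_le {E ι : Type*}
    [NormedAddCommGroup E] [NormedSpace ℝ E] [MeasurableSpace E] [BorelSpace E]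
    [FiniteDimensional ℝ E] (μ : Measure E) [μ.IsAddHaarMeasure] [Fintype ι] (c : ι → E)
    {ρ : ℝ} (hρ : 0 ≤ ρ) :
    μ (⋃ i, closedBall (c i) ρ) ≤
      Fintype.card ι * ENNReal.ofReal (ρ ^ Module.finrank ℝ E) * μ (ball 0 1) :=
  calc μ (⋃ i, closedBall (c i) ρ)
      ≤ ∑ i, μ (closedBall (c i) ρ) := measure_iUnion_fintype_le _ _
    _ = Fintype.card ι * ENNReal.ofReal (ρ ^ Module.finrank ℝ E) * μ (ball 0 1) := by
        simp only [Measure.addHaar_closedBall μ _ hρ, Finset.sum_const, Finset.card_univ,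
          nsmul_eq_mul, mul_assoc]

theorem add_le_one_add_one_div_mul {ε R s ρ : ℝ} (hε : 0 ≤ ε) (hρ : 0 < ρ) (hρs : ρ ≤ s)
    (hεR : ε * s ≤ R) :
    ε + R ≤ (1 + 1 / ρ) * R := by
  have : ε ≤ 1 / ρ * R := by
    rw [one_div_mul_eq_div, le_div_iff₀ hρ]
    nlinarith
  linarith

theorem stmt14_general (d : ℕ) (F : Set (EuclideanSpace ℝ (Fin d)))
    (rmin rmax : ℝ) (hrmin : 0 < rmin)
    (r : ℕ → ℝ) (hr : ∀ i, r i ∈ Set.Icc rmin rmax)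
    (N : ℕ → ℕ) (n : ℕ) (hn : 1 ≤ n)
    (x : Fin (∏ i ∈ range n, N i) → EuclideanSpace ℝ (Fin d))
    (hcover : F ⊆ ⋃ j, closedBall (x j) (∏ i ∈ range n, r i))
    (ε : ℝ) (hεl : ∏ i ∈ range n, r i < ε) (hεu : ε ≤ ∏ i ∈ range (n - 1), r i) :
    volume (cthickening ε F) ≤
      ENNReal.ofReal ((1 + 1 / rmin) ^ d * ∏ i ∈ range n, (r i ^ d * N i)) *
        volume (ball (0 : EuclideanSpace ℝ (Fin d)) 1) := by
  set R : ℝ := ∏ i ∈ range n, r i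
  have hR : 0 < R := prod_pos fun i _ => hrmin.trans_le (hr i).1
  have hε : 0 < ε := hR.trans hεl
  have hεR : ε + R ≤ (1 + 1 / rmin) * R := by
    refine add_le_one_add_one_div_mul hε.le hrmin (hr (n - 1)).1 ?_
    calc ε * r (n - 1) ≤ (∏ i ∈ range (n - 1), r i) * r (n - 1) :=
          mul_le_mul_of_nonneg_right hεu (hrmin.trans_le (hr _).1).le
      _ = R := by rw [← prod_range_succ, Nat.sub_add_cancel hn]
  calc volume (cthickening ε F)
      ≤ volume (⋃ j, closedBall (x j) (ε + R)) :=
        measure_mono (cthickening_subset_iUnion_closedBall_add hε.le hcover)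
    _ ≤ (∏ i ∈ range n, N i : ℕ) * ENNReal.ofReal ((ε + R) ^ d) *
          volume (ball (0 : EuclideanSpace ℝ (Fin d)) 1) := by
        simpa using Measure.addHaar_iUnion_closedBall_le volume x (by positivity)
    _ ≤ _ := by
        rw [← ENNReal.ofReal_natCast, ← ENNReal.ofReal_mul (Nat.cast_nonneg _)]
        gcongr ?_ * _
        refine ENNReal.ofReal_le_ofReal ?_
        calc ((∏ i ∈ range n, N i : ℕ) : ℝ) * (ε + R) ^ d
            ≤ (∏ i ∈ range n, (N i : ℝ)) * ((1 + 1 / rmin) * R) ^ d := by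
              push_cast
              gcongr
          _ = (1 + 1 / rmin) ^ d * ∏ i ∈ range n, (r i ^ d * N i) := by
              rw [prod_mul_distrib, Finset.prod_pow, mul_pow]
              ring

/-- Upper volume bound in the equicontractive case: if `F ⊆ B(0,1)` is covered by
`N_1⋯N_n` balls of radius `r_1⋯r_n` and `r_1⋯r_n < ε ≤ r_1⋯r_{n−1}`, then
`L^d(⟨F⟩_ε) ≤ (1 + 1/r_min)^d · V_d · Π_i (r_i^d N_i)`. -/
theorem stmt14 (d : ℕ) (hd : 1 ≤ d) (F : Set (EuclideanSpace ℝ (Fin d)))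
    (hF : IsCompact F) (hFK : F ⊆ closedBall (0 : EuclideanSpace ℝ (Fin d)) 1)
    (rmin rmax : ℝ) (hrmin : 0 < rmin) (hrmax : rmax < 1)
    (r : ℕ → ℝ) (hr : ∀ i, r i ∈ Set.Icc rmin rmax)
    (N : ℕ → ℕ) (hN : ∀ i, 1 ≤ N i) (n : ℕ) (hn : 1 ≤ n)
    (x : Fin (∏ i ∈ range n, N i) → EuclideanSpace ℝ (Fin d))
    (hcover : F ⊆ ⋃ j, closedBall (x j) (∏ i ∈ range n, r i))
    (ε : ℝ) (hεl : ∏ i ∈ range n, r i < ε) (hεu : ε ≤ ∏ i ∈ range (n - 1), r i) :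
    volume (cthickening ε F) ≤
      ENNReal.ofReal ((1 + 1 / rmin) ^ d * ∏ i ∈ range n, (r i ^ d * N i)) *
        volume (ball (0 : EuclideanSpace ℝ (Fin d)) 1) :=
  stmt14_general d F rmin rmax hrmin r hr N n hn x hcover ε hεl hεu
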